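/- arXiv:1412.2283 — 5 statements merged into one kernel-verified Lean document; each statement's English description precedes it below -/
import Mathlib

section
/- Let H be an inert subnormal subgroup of a group G and let K be a subgroup of G with |K : H ∩ K| finite. Then |⟨H, K⟩ : H| is finite. -/
variable {G : Type*} [Group G]

/-- The conjugate subgroup `H^g = gHg⁻¹`. -/
def conjS (g : G) (H : Subgroup G) : Subgroup G :=
  H.map (MulAut.conj g).toMonoidHom

/-- `H` is inert in `G` if `|H : H ∩ H^g|` is finite for all `g`. -/
def Inert (H : Subgroup G) : Prop :=
  ∀ g : G, (conjS g H).relIndex H ≠ 0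

/-- `H` is strongly inert if `|⟨H, H^g⟩ : H|` is finite for all `g`. -/
def StronglyInert (H : Subgroup G) : Prop :=
  ∀ g : G, H.relIndex (H ⊔ conjS g H) ≠ 0

/-- `c` is a chain of successive normal inclusions of length `n`. -/
def SubnormalChain (c : ℕ → Subgroup G) (n : ℕ) : Prop :=
  ∀ i < n, c i ≤ c (i + 1) ∧ ∀ x ∈ c (i + 1), ∀ h ∈ c i, x * h * x⁻¹ ∈ c i

/-- `H` is subnormal in `G`. -/
def Subnormal (H : Subgroup G) : Prop :=
  ∃ n : ℕ, ∃ c : ℕ → Subgroup G, c 0 = H ∧ c n = ⊤ ∧ SubnormalChain c n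

/-!
Induct on the length of a subnormal series `H = c 0 ⊴ c 1 ⊴ ⋯ ⊴ c n`, proving the claim for
all `K ≤ c n`. For `K ≤ c (n + 1)`, the subgroup `M = ⟨H ^ k | k ∈ K⟩` is generated by the
finitely many conjugates `H ^ q`, `q` running over a transversal of `H ∩ K` in `K`, and each of
them lies in `c n`. Adjoining them one at a time keeps the index over `H` finite: by inertness,
`|H ^ g ⊔ L : H|` is finite as soon as `|H ⊔ L ^ g⁻¹ : H|` is, which is the induction
hypothesis. Finally `K` normalizes `M`, so `|⟨H, K⟩ : M| = |MK : M| = |K : M ∩ K|`, which is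
at most `|K : H ∩ K|`.
-/

open scoped Pointwise
open ConjAct

namespace Subgroup

theorem pointwise_smul_iSup {α ι : Type*} [Monoid α] [MulDistribMulAction α G] (a : α)
    (S : ι → Subgroup G) : a • iSup S = ⨆ i, a • S i :=
  map_iSup _ _

theorem relIndex_sup_left_of_le_normalizer {K M : Subgroup G}
    (hK : K ≤ normalizer (M : Set G)) : M.relIndex (K ⊔ M) = M.relIndex K := by
  have := normal_subgroupOf_of_le_normalizer hK
  have := normal_subgroupOf_sup_of_le_normalizer hK
  exact Nat.card_congr (QuotientGroup.quotientInfEquivProdNormalizerQuotient K M hK).toEquiv.symm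

theorem conjAct_smul_le_of_mem_normalizer {H N : Subgroup G} {g : G}
    (hg : g ∈ normalizer (N : Set G)) (hH : H ≤ N) : toConjAct g • H ≤ N :=
  conjAct_pointwise_smul_eq_self hg ▸ pointwise_smul_le_pointwise_smul_iff.2 hH

theorem le_normalizer_iSup_conjAct_smul (H K : Subgroup G) :
    K ≤ normalizer ((⨆ k : K, toConjAct (k : G) • H : Subgroup G) : Set G) := by
  intro k hk
  rw [← conjAct_pointwise_smul_iff, pointwise_smul_iSup]
  simp_rw [smul_smul, ← toConjAct_mul]
  exact (Equiv.mulLeft (⟨k, hk⟩ : K)).iSup_comp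
    (g := fun k' : K => toConjAct (k' : G) • H)

theorem iSup_conjAct_smul_eq_iSup_out (H K : Subgroup G) :
    ⨆ k : K, toConjAct (k : G) • H = ⨆ q : K ⧸ H.subgroupOf K, toConjAct (q.out : G) • H := by
  refine le_antisymm (iSup_le fun k => ?_) (iSup_le fun q => le_iSup_of_le q.out le_rfl)
  set r := (QuotientGroup.mk k : K ⧸ H.subgroupOf K).out
  have hr : r⁻¹ * k ∈ H.subgroupOf K := QuotientGroup.eq.mp (QuotientGroup.out_eq' _)
  have hk : (k : G) = r * ((r⁻¹ * k : K) : G) := by simp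
  rw [hk, toConjAct_mul, mul_smul,
    conjAct_pointwise_smul_eq_self (le_normalizer (mem_subgroupOf.mp hr))]
  exact le_iSup_of_le (QuotientGroup.mk k) le_rfl

end Subgroup

open Subgroup

theorem conjS_eq_toConjAct_smul (g : G) (H : Subgroup G) : conjS g H = toConjAct g • H := by
  ext x
  rw [mem_pointwise_smul_iff_inv_smul_mem, ConjAct.smul_def]
  simp only [conjS, mem_map, map_inv, ofConjAct_toConjAct]
  constructor
  · rintro ⟨y, hy, rfl⟩
    simpa [mul_assoc] using hy
  · exact fun h => ⟨_, h, by simp [mul_assoc]⟩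

namespace SubnormalChain

variable {c : ℕ → Subgroup G} {n : ℕ}

theorem of_succ (hc : SubnormalChain c (n + 1)) : SubnormalChain c n :=
  fun i hi => hc i (by omega)

theorem succ_le_normalizer (hc : SubnormalChain c (n + 1)) :
    c (n + 1) ≤ normalizer (c n : Set G) :=
  have hle := (hc n n.lt_succ_self).1
  (normal_subgroupOf_iff_le_normalizer hle).1 <|
    (normal_subgroupOf_iff hle).2 fun h k hh hk => (hc n n.lt_succ_self).2 k hk h hh

theorem zero_le (hc : SubnormalChain c n) : c 0 ≤ c n := by
  induction n with
  | zero => exact le_rfl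
  | succ n ih => exact (ih hc.of_succ).trans (hc n n.lt_succ_self).1

end SubnormalChain

namespace Inert

variable {H N : Subgroup G}

theorem conjAct_smul_relIndex_ne_zero (hH : Inert H) (g : G) :
    (toConjAct g • H).relIndex H ≠ 0 :=
  conjS_eq_toConjAct_smul g H ▸ hH g

theorem relIndex_conjAct_smul_ne_zero (hH : Inert H) (g : G) :
    H.relIndex (toConjAct g • H) ≠ 0 := by
  rw [← relIndex_pointwise_smul (toConjAct g)⁻¹, inv_smul_smul, ← toConjAct_inv]
  exact hH.conjAct_smul_relIndex_ne_zero g⁻¹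

theorem relIndex_conjAct_smul_sup_ne_zero (hH : Inert H)
    (hjoin : ∀ K ≤ N, H.relIndex K ≠ 0 → H.relIndex (H ⊔ K) ≠ 0)
    {g : G} (hg : g ∈ normalizer (N : Set G)) {L : Subgroup G} (hLN : L ≤ N)
    (hHL : H.relIndex L ≠ 0) : H.relIndex (toConjAct g • H ⊔ L) ≠ 0 := by
  have hL'N : (toConjAct g)⁻¹ • L ≤ N := by
    rw [← toConjAct_inv]
    exact conjAct_smul_le_of_mem_normalizer (inv_mem hg) hLN
  have hHL' : H.relIndex ((toConjAct g)⁻¹ • L) ≠ 0 := by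
    rw [← relIndex_pointwise_smul (toConjAct g), smul_inv_smul]
    exact relIndex_ne_zero_trans (hH.conjAct_smul_relIndex_ne_zero g) hHL
  have hjoin' : (toConjAct g • H).relIndex (toConjAct g • H ⊔ L) ≠ 0 := by
    rw [← relIndex_pointwise_smul (toConjAct g)⁻¹, smul_sup, inv_smul_smul]
    exact hjoin _ hL'N hHL'
  exact relIndex_ne_zero_trans (hH.relIndex_conjAct_smul_ne_zero g) hjoin'

theorem relIndex_iSup_conjAct_smul_ne_zero (hH : Inert H)
    (hjoin : ∀ K ≤ N, H.relIndex K ≠ 0 → H.relIndex (H ⊔ K) ≠ 0) (hHN : H ≤ N)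
    {ι : Type*} [Finite ι] {f : ι → G} (hf : ∀ i, f i ∈ normalizer (N : Set G)) :
    H.relIndex (⨆ i, toConjAct (f i) • H) ≠ 0 := by
  classical
  have hfin : ∀ s : Finset ι, H.relIndex (⨆ i ∈ s, toConjAct (f i) • H) ≠ 0 ∧
      ⨆ i ∈ s, toConjAct (f i) • H ≤ N := by
    intro s
    induction s using Finset.induction_on with
    | empty => simp
    | insert a s _ ih =>
      rw [Finset.iSup_insert]
      exact ⟨hH.relIndex_conjAct_smul_sup_ne_zero hjoin (hf a) ih.2 ih.1,
        sup_le (conjAct_smul_le_of_mem_normalizer (hf a) hHN) ih.2⟩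
  cases nonempty_fintype ι
  simpa using (hfin Finset.univ).1

theorem relIndex_sup_ne_zero_of_subnormalChain (hH : Inert H) {c : ℕ → Subgroup G} {n : ℕ}
    (hc : SubnormalChain c n) (h0 : c 0 = H) {K : Subgroup G} (hKc : K ≤ c n)
    (hHK : H.relIndex K ≠ 0) : H.relIndex (H ⊔ K) ≠ 0 := by
  induction n generalizing K with
  | zero =>
    rw [sup_eq_left.2 (h0 ▸ hKc), relIndex_self]
    exact one_ne_zero
  | succ n ih =>
    set M := ⨆ k : K, toConjAct (k : G) • H
    have hHM : H ≤ M := le_iSup_of_le 1 (by simp)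
    have hMHK : M ≤ H ⊔ K := iSup_le fun k =>
      conjAct_smul_le_of_mem_normalizer (le_normalizer (mem_sup_right k.2)) le_sup_left
    have hHM_fin : H.relIndex M ≠ 0 := by
      have : (H.subgroupOf K).FiniteIndex := ⟨hHK⟩
      rw [show M = _ from iSup_conjAct_smul_eq_iSup_out H K]
      exact hH.relIndex_iSup_conjAct_smul_ne_zero (fun _ => ih hc.of_succ)
        (h0 ▸ hc.of_succ.zero_le) fun q => hc.succ_le_normalizer (hKc q.out.2)
    have hsup : H ⊔ K = K ⊔ M :=
      le_antisymm (sup_le (hHM.trans le_sup_right) le_sup_left) (sup_le le_sup_right hMHK)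
    rw [hsup]
    refine relIndex_ne_zero_trans hHM_fin ?_
    rw [relIndex_sup_left_of_le_normalizer (le_normalizer_iSup_conjAct_smul H K)]
    exact fun hMK => hHK (relIndex_eq_zero_of_le_left hHM hMK)

end Inert

/-- If `H` is an inert subnormal subgroup of `G` and `K ≤ G` with `|K : H ∩ K|`
finite, then `|⟨H, K⟩ : H|` is finite. -/
theorem join_relindex_ne_zero_of_inert_subnormal (H K : Subgroup G)
    (hin : Inert H) (hsn : Subnormal H) (hK : H.relIndex K ≠ 0) :
    H.relIndex (H ⊔ K) ≠ 0 := by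
  obtain ⟨n, c, h0, htop, hc⟩ := hsn
  exact hin.relIndex_sup_ne_zero_of_subnormalChain hc h0 (htop ▸ le_top) hK
end

section
/- In a generalized dihedral group G = ⟨x⟩ ⋉ A, where A is abelian and x acts on A as the inversion map, every subgroup H satisfies |H : H_G| ≤ 2, where H_G is the normal core of H in G. In particular every subgroup of G is inert. -/
variable {G : Type*} [Group G]

/-!
Every element of `G = ⟨x⟩A` acts on `A` by `a ↦ a` or `a ↦ a⁻¹`, so every subgroup of `A`, in
particular `H ∩ A`, is normal in `G` and hence lies in `H_G`. Thus `|H : H_G|` divides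
`|H : H ∩ A| = |HA : A|`, which divides `|G : A|`, and `G / A` is generated by the image of the
involution `x`. Finally `H_G ≤ H^g`, so `|H : H ∩ H^g|` divides `|H : H_G|` and is finite.
-/

namespace Subgroup

def signedCentralizer (A : Subgroup G) : Subgroup G where
  carrier := {g | ∀ a ∈ A, g * a * g⁻¹ = a ∨ g * a * g⁻¹ = a⁻¹}
  one_mem' a _ := Or.inl (by group)
  mul_mem' {g h} hg hh a ha := by
    have hconj : g * h * a * (g * h)⁻¹ = g * (h * a * h⁻¹) * g⁻¹ := by group
    rcases hh a ha with hh | hh <;> rw [hconj, hh]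
    · exact hg a ha
    · rw [show g * a⁻¹ * g⁻¹ = (g * a * g⁻¹)⁻¹ by group]
      rcases hg a ha with hg | hg <;> simp [hg]
  inv_mem' {g} hg a ha := by
    rcases hg a ha with hg | hg
    · left
      nth_rewrite 1 [← hg]
      group
    · right
      calc g⁻¹ * a * g⁻¹⁻¹ = g⁻¹ * a⁻¹⁻¹ * g := by group
        _ = a⁻¹ := by nth_rewrite 1 [← hg]; group

variable {A H K : Subgroup G}

theorem normal_of_le_of_signedCentralizer_eq_top (hA : A.signedCentralizer = ⊤) (hKA : K ≤ A) :
    K.Normal where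
  conj_mem k hk g := by
    have hg : g ∈ A.signedCentralizer := hA ▸ mem_top g
    rcases hg k (hKA hk) with hconj | hconj <;> rw [hconj]
    · exact hk
    · exact K.inv_mem hk

theorem closure_singleton_sup_le_signedCentralizer {x : G}
    (hcomm : ∀ a ∈ A, ∀ b ∈ A, a * b = b * a) (hinv : ∀ a ∈ A, x * a * x⁻¹ = a⁻¹) :
    closure {x} ⊔ A ≤ A.signedCentralizer := by
  refine sup_le ((closure_le _).mpr (Set.singleton_subset_iff.mpr fun a ha => Or.inr (hinv a ha)))
    fun b hb a ha => Or.inl ?_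
  rw [hcomm b hb a ha, mul_inv_cancel_right]

theorem index_dvd_orderOf_of_zpowers_sup_eq_top [A.Normal] {x : G} (h : zpowers x ⊔ A = ⊤) :
    A.index ∣ orderOf x := by
  rw [← relIndex_top_right, ← h, relIndex_sup_right, ← Nat.card_zpowers]
  exact relIndex_dvd_card A (zpowers x)

theorem relIndex_normalCore_dvd_index [A.Normal] (hHA : (H ⊓ A).Normal) :
    H.normalCore.relIndex H ∣ A.index := by
  refine (relIndex_dvd_of_le_left H ((normal_le_normalCore (N := H ⊓ A)).mpr inf_le_left)).trans ?_
  rw [inf_relIndex_left]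
  exact relIndex_dvd_index_of_normal A H

end Subgroup

theorem normalCore_le_conjS (g : G) (H : Subgroup G) : H.normalCore ≤ conjS g H := by
  rw [← Subgroup.Normal.map_conj_eq H.normalCore g]
  exact Subgroup.map_mono H.normalCore_le

theorem inert_of_relIndex_normalCore_ne_zero {H : Subgroup G} (h : H.normalCore.relIndex H ≠ 0) :
    Inert H :=
  fun g hg => h (Subgroup.relIndex_eq_zero_of_le_left (normalCore_le_conjS g H) hg)

open Subgroup in
theorem dihedral_subgroup_core_index_le_two_general
    (A : Subgroup G) (hA : A.Normal) (hcomm : ∀ a ∈ A, ∀ b ∈ A, a * b = b * a)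
    (x : G) (hx2 : x ^ 2 = 1)
    (hinv : ∀ a ∈ A, x * a * x⁻¹ = a⁻¹)
    (hgen : Subgroup.closure {x} ⊔ A = ⊤) :
    ∀ H : Subgroup G,
      (H.normalCore.relIndex H ≤ 2 ∧ H.normalCore.relIndex H ≠ 0) ∧ Inert H := by
  intro H
  have hsigned : A.signedCentralizer = ⊤ :=
    top_le_iff.mp (hgen ▸ closure_singleton_sup_le_signedCentralizer hcomm hinv)
  have hindex : A.index ∣ 2 := by
    rw [← zpowers_eq_closure] at hgen
    exact (index_dvd_orderOf_of_zpowers_sup_eq_top hgen).trans (orderOf_dvd_of_pow_eq_one hx2)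
  have hcore : H.normalCore.relIndex H ∣ 2 :=
    (relIndex_normalCore_dvd_index
      (normal_of_le_of_signedCentralizer_eq_top hsigned inf_le_right)).trans hindex
  have hfinite : H.normalCore.relIndex H ≠ 0 := ne_zero_of_dvd_ne_zero two_ne_zero hcore
  exact ⟨⟨Nat.le_of_dvd two_pos hcore, hfinite⟩,
    inert_of_relIndex_normalCore_ne_zero hfinite⟩

/-- In a generalized dihedral group `G = ⟨x⟩ ⋉ A`, every subgroup `H` satisfies
`|H : H_G| ≤ 2`; in particular every subgroup is inert. -/
theorem dihedral_subgroup_core_index_le_two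
    (A : Subgroup G) (hA : A.Normal) (hcomm : ∀ a ∈ A, ∀ b ∈ A, a * b = b * a)
    (x : G) (hx1 : x ≠ 1) (hx2 : x ^ 2 = 1) (hxA : x ∉ A)
    (hinv : ∀ a ∈ A, x * a * x⁻¹ = a⁻¹)
    (hgen : Subgroup.closure {x} ⊔ A = ⊤) :
    ∀ H : Subgroup G,
      (H.normalCore.relIndex H ≤ 2 ∧ H.normalCore.relIndex H ≠ 0) ∧ Inert H :=
  dihedral_subgroup_core_index_le_two_general A hA hcomm x hx2 hinv hgen
end

section
/- The set of inertial automorphisms of an abelian group A forms a subgroup of Aut(A). -/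
namespace MulAut

variable {G : Type*} [Group G]

theorem map_one_toMonoidHom (X : Subgroup G) : X.map (1 : MulAut G).toMonoidHom = X :=
  X.map_id

theorem map_mul_toMonoidHom (γ δ : MulAut G) (X : Subgroup G) :
    X.map (γ * δ).toMonoidHom = (X.map δ.toMonoidHom).map γ.toMonoidHom :=
  (X.map_map γ.toMonoidHom δ.toMonoidHom).symm

theorem map_map_inv_toMonoidHom (γ : MulAut G) (X : Subgroup G) :
    (X.map γ⁻¹.toMonoidHom).map γ.toMonoidHom = X := by
  rw [← map_mul_toMonoidHom, mul_inv_cancel, map_one_toMonoidHom]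

def IsInertial (γ : MulAut G) : Prop :=
  ∀ X : Subgroup G, X.Commensurable (X.map γ.toMonoidHom)

theorem isInertial_one : IsInertial (1 : MulAut G) := fun X =>
  (map_one_toMonoidHom X).symm ▸ Subgroup.Commensurable.refl X

theorem IsInertial.mul {γ δ : MulAut G} (hγ : IsInertial γ) (hδ : IsInertial δ) :
    IsInertial (γ * δ) := fun X => by
  rw [map_mul_toMonoidHom]
  exact (hδ X).trans (hγ _)

theorem IsInertial.inv {γ : MulAut G} (hγ : IsInertial γ) : IsInertial γ⁻¹ := fun X => by
  have h := hγ (X.map γ⁻¹.toMonoidHom)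
  rw [map_map_inv_toMonoidHom] at h
  exact h.symm

variable (G) in
def inertialSubgroup : Subgroup (MulAut G) where
  carrier := {γ | IsInertial γ}
  one_mem' := isInertial_one
  mul_mem' := IsInertial.mul
  inv_mem' := IsInertial.inv

end MulAut

/-- The inertial automorphisms of an abelian group `A` form a subgroup of
`Aut(A)`. -/
theorem inertial_automorphisms_form_subgroup {A : Type*} [CommGroup A] :
    ∃ S : Subgroup (MulAut A),
      ∀ γ : MulAut A,
        γ ∈ S ↔ ∀ X : Subgroup A, Subgroup.Commensurable X (X.map γ.toMonoidHom) :=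
  ⟨MulAut.inertialSubgroup A, fun _ => Iff.rfl⟩
end

section
/- Let G₁ ≤ G₀ be normal subgroups of a group G with G₁ and G/G₀ finite. If every subgroup H with G₁ ≤ H ≤ G₀ and H/G₁ subnormal in G₀/G₁ is inert in G, then every subnormal subgroup of G is inert; that is, G is a T̃-group. -/
variable {G : Type*} [Group G]

/-! `H` is commensurable with `K = HG₁ ∩ G₀`: `G₁` is finite and `G₀` has finite index.
Subnormality passes from `H` to `HG₁`, then to `K/G₁ ≤ G₀/G₁`, so `K` is inert by hypothesis.
Inertness only depends on the commensurability class, since `H` is inert iff its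
commensurator is all of `G`. -/

open Pointwise

namespace Subgroup

theorem relIndex_sup_ne_zero_of_finite (H : Subgroup G) {N : Subgroup G} [N.Normal] [Finite N] :
    H.relIndex (H ⊔ N) ≠ 0 := by
  -- every coset of `H` in `H ⊔ N = N * H` has a representative in `N`
  have : Finite (↥(H ⊔ N) ⧸ H.subgroupOf (H ⊔ N)) := by
    refine Finite.of_surjective
      (fun n : N => ((⟨n, mem_sup_right n.2⟩ : ↥(H ⊔ N)) : ↥(H ⊔ N) ⧸ H.subgroupOf (H ⊔ N))) ?_
    rintro ⟨x⟩
    obtain ⟨n, hn, h, hh, hx⟩ : (x : G) ∈ (N : Set G) * H := by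
      rw [← normal_mul, sup_comm]; exact x.2
    refine ⟨⟨n, hn⟩, QuotientGroup.eq.2 ?_⟩
    simpa [mem_subgroupOf, ← hx, mul_assoc] using hh
  exact index_ne_zero_of_finite

theorem commensurable_sup_of_finite (H : Subgroup G) {N : Subgroup G} [N.Normal] [Finite N] :
    Commensurable H (H ⊔ N) :=
  ⟨H.relIndex_sup_ne_zero_of_finite, by simp [relIndex_eq_one.mpr le_sup_left]⟩

theorem commensurable_inf_of_index_ne_zero (H : Subgroup G) {K : Subgroup G} (hK : K.index ≠ 0) :
    Commensurable H (H ⊓ K) :=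
  ⟨by simp [relIndex_eq_one.mpr inf_le_left], by
    rw [inf_relIndex_left]; exact mt index_eq_zero_of_relIndex_eq_zero hK⟩

theorem IsSubnormal.sup_normal {H : Subgroup G} (hH : H.IsSubnormal) (N : Subgroup G) [N.Normal] :
    (H ⊔ N).IsSubnormal := by
  rw [← QuotientGroup.ker_mk' N, ← comap_map_eq]
  exact hH.quotient.comap _

end Subgroup

theorem conjS_eq_smul (g : G) (H : Subgroup G) : conjS g H = ConjAct.toConjAct g • H := rfl

theorem inert_iff_commensurator_eq_top {H : Subgroup G} :
    Inert H ↔ Subgroup.Commensurable.commensurator H = ⊤ := by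
  simp only [Subgroup.eq_top_iff', Subgroup.Commensurable.commensurator_mem_iff, Inert,
    conjS_eq_smul]
  refine ⟨fun h g => ⟨h g, ?_⟩, fun h g => (h g).1⟩
  rw [← Subgroup.relIndex_pointwise_smul (ConjAct.toConjAct g)⁻¹, inv_smul_smul, ← map_inv]
  exact h g⁻¹

theorem Inert.of_commensurable {H K : Subgroup G} (hK : Inert K) (hHK : H.Commensurable K) :
    Inert H := by
  rw [inert_iff_commensurator_eq_top] at hK ⊢
  rwa [hHK.eq]

theorem subnormal_iff_isSubnormal {H : Subgroup G} : Subnormal H ↔ H.IsSubnormal := by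
  constructor
  · rintro ⟨n, c, rfl, hcn, hc⟩
    induction n generalizing c with
    | zero => exact hcn ▸ .top
    | succ n ih =>
      obtain ⟨hle, hconj⟩ := hc 0 n.succ_pos
      exact .step _ _ hle (ih (fun i => c (i + 1)) hcn fun i hi => hc (i + 1) (by omega))
        ((Subgroup.normal_subgroupOf_iff hle).2 fun h k hh hk => hconj k hk h hh)
  · intro hH
    induction hH with
    | top => exact ⟨0, fun _ => ⊤, rfl, rfl, fun i hi => absurd hi i.not_lt_zero⟩
    | step H K hle _ hN ih =>
      obtain ⟨n, c, rfl, hcn, hc⟩ := ih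
      refine ⟨n + 1, fun | 0 => H | i + 1 => c i, rfl, hcn, ?_⟩
      rintro (_ | i) hi
      · exact ⟨hle, fun x hx h hh => (Subgroup.normal_subgroupOf_iff hle).1 hN h x hh hx⟩
      · exact hc i (by omega)

theorem ttilde_of_finite_sandwich_general
    (G₀ G₁ : Subgroup G) (h01 : G₁ ≤ G₀)
    [hn1 : G₁.Normal]
    (hfin1 : Finite G₁) (hfin0 : G₀.index ≠ 0)
    (hhyp : ∀ H : Subgroup G, G₁ ≤ H → H ≤ G₀ →
      Subnormal ((H.subgroupOf G₀).map (QuotientGroup.mk' (G₁.subgroupOf G₀))) →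
      Inert H) :
    ∀ H : Subgroup G, Subnormal H → Inert H := by
  intro H hH
  rw [subnormal_iff_isSubnormal] at hH
  have hK : Inert ((H ⊔ G₁) ⊓ G₀) := by
    refine hhyp _ (le_inf le_sup_right h01) inf_le_right ?_
    rw [subnormal_iff_isSubnormal, Subgroup.inf_subgroupOf_right]
    exact (hH.sup_normal G₁).subgroupOf.quotient
  exact hK.of_commensurable
    ((H.commensurable_sup_of_finite).trans ((H ⊔ G₁).commensurable_inf_of_index_ne_zero hfin0))

/-- Let `G₁ ≤ G₀` be normal subgroups of `G` with `G₁` finite and `G/G₀`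
finite. If every subgroup `H` with `G₁ ≤ H ≤ G₀` whose image `H/G₁` is
subnormal in `G₀/G₁` is inert in `G`, then every subnormal subgroup of `G`
is inert. -/
theorem ttilde_of_finite_sandwich
    (G₀ G₁ : Subgroup G) (h01 : G₁ ≤ G₀)
    [hn1 : G₁.Normal] [hn0 : G₀.Normal]
    (hfin1 : Finite G₁) (hfin0 : G₀.index ≠ 0)
    (hhyp : ∀ H : Subgroup G, G₁ ≤ H → H ≤ G₀ →
      Subnormal ((H.subgroupOf G₀).map (QuotientGroup.mk' (G₁.subgroupOf G₀))) →
      Inert H) :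
    ∀ H : Subgroup G, Subnormal H → Inert H :=
  ttilde_of_finite_sandwich_general G₀ G₁ h01 (hn1 := hn1) hfin1 hfin0 hhyp
end

section
/- Let G be a semidihedral group on a torsion-free abelian subgroup A of finite rank, and let H be a subnormal subgroup of G not contained in A, with h ∈ H \ A acting on A as the rational-power automorphism m/n with m/n ≠ 1. If H has subnormality defect i, then H contains A^((m−n)^i), and consequently |HA : H| is finite. -/
variable {G : Type*} [Group G]

/-!
If `h` acts on the abelian normal subgroup `A` as the power `m/n`, then for `b ∈ A` the
commutator `[b, h]` lies in `A` and has `m`-th power `b ^ (m - n)`. So if `b` lies in a term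
of the subnormal series that normalizes the previous term, and `h` lies in that previous term,
then `b ^ (m - n)` descends one step; after `i` steps `A ^ ((m - n) ^ i) ≤ H`. Hence
`A / (A ∩ H)` is abelian of finite exponent and finite rank, so finite, and
`|HA : H| = |A : A ∩ H|`.
-/

open Subgroup
open scoped Pointwise IsMulCommutative

/-- Prüfer rank at most `r`, stated with finite subsets instead of finitely generated
subgroups. -/
def HasPruferRankLE (Q : Type*) [Group Q] (r : ℕ) : Prop :=
  ∀ s : Finset Q, ∃ t : Finset Q, t.card ≤ r ∧ (s : Set Q) ⊆ closure (t : Set Q)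

theorem HasPruferRankLE.of_surjective {Q Q' : Type*} [Group Q] [Group Q'] {r : ℕ}
    (hQ : HasPruferRankLE Q r) {f : Q →* Q'} (hf : Function.Surjective f) :
    HasPruferRankLE Q' r := by
  classical
  intro s
  obtain ⟨t, ht, hst⟩ := hQ (s.image (Function.surjInv hf))
  refine ⟨t.image f, Finset.card_image_le.trans ht, fun y hy => ?_⟩
  rw [Finset.coe_image, ← MonoidHom.map_closure]
  refine ⟨Function.surjInv hf y, hst ?_, Function.surjInv_eq hf y⟩
  exact Finset.mem_image_of_mem _ hy

theorem hasPruferRankLE_of_forall_fg {A : Subgroup G} {r : ℕ}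
    (hrk : ∀ B : Subgroup G, B ≤ A → B.FG →
      ∃ S : Finset G, S.card ≤ r ∧ closure (S : Set G) = B) :
    HasPruferRankLE A r := by
  classical
  intro s
  set T : Finset G := s.map (Function.Embedding.subtype _)
  have hTA : closure (T : Set G) ≤ A := by
    rw [closure_le]
    simp +contextual [T, Set.subset_def]
  obtain ⟨S, hS, hST⟩ := hrk _ hTA ⟨T, rfl⟩
  have hSA : (S : Set G) ⊆ A := Subgroup.subset_closure.trans (hST ▸ hTA)
  refine ⟨S.subtype (· ∈ A), ?_, fun x hx => ?_⟩
  · rw [Finset.card_subtype]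
    exact (Finset.card_filter_le S _).trans hS
  have hSimage : A.subtype '' (S.subtype (· ∈ A) : Set A) = S := by
    ext y
    simpa using fun hy : y ∈ S => hSA hy
  rw [SetLike.mem_coe, ← mem_map_iff_mem A.subtype_injective, MonoidHom.map_closure, hSimage, hST]
  exact subset_closure (by simpa [T] using hx)

section Exponent

variable {Q : Type*} [CommGroup Q] {e : ℕ}

theorem card_le_pow_card_of_subset_closure (he : 0 < e) (hexp : ∀ y : Q, y ^ e = 1)
    {s t : Finset Q} (hst : (s : Set Q) ⊆ closure (t : Set Q)) : s.card ≤ e ^ t.card := by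
  classical
  let φ : (t → Fin e) → Q := fun v => ∏ x : t, (x : Q) ^ (v x : ℕ)
  have hsφ : s ⊆ Finset.univ.image φ := by
    intro y hy
    have hy' : y ∈ (closure (t : Set Q)).toSubmonoid := hst hy
    rw [closure_toSubmonoid_of_isOfFinOrder fun x _ =>
        isOfFinOrder_iff_pow_eq_one.mpr ⟨e, he, hexp x⟩,
      Submonoid.mem_closure_finset] at hy'
    obtain ⟨f, -, rfl⟩ := hy'
    refine Finset.mem_image.mpr ⟨fun x => ⟨f x % e, Nat.mod_lt _ he⟩, Finset.mem_univ _, ?_⟩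
    rw [← Finset.prod_coe_sort t]
    exact Finset.prod_congr rfl fun x _ => (pow_eq_pow_mod _ (hexp x)).symm
  calc s.card ≤ (Finset.univ.image φ).card := Finset.card_le_card hsφ
    _ ≤ Fintype.card (t → Fin e) := Finset.card_image_le
    _ = e ^ t.card := by simp

theorem HasPruferRankLE.finite_of_pow_eq_one {r : ℕ} (hQ : HasPruferRankLE Q r) (he : 0 < e)
    (hexp : ∀ y : Q, y ^ e = 1) : Finite Q := by
  by_contra hinf
  have : Infinite Q := not_finite_iff_infinite.mp hinf
  obtain ⟨s, hs⟩ := Infinite.exists_subset_card_eq Q (e ^ r + 1)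
  obtain ⟨t, ht, hst⟩ := hQ s
  have := (card_le_pow_card_of_subset_closure he hexp hst).trans (Nat.pow_le_pow_right he ht)
  omega

theorem HasPruferRankLE.index_ne_zero_of_zpow_mem {r : ℕ} (hQ : HasPruferRankLE Q r)
    {S : Subgroup Q} {k : ℤ} (hk : k ≠ 0) (hS : ∀ y : Q, y ^ k ∈ S) : S.index ≠ 0 := by
  have hexp : ∀ y : Q ⧸ S, y ^ k.natAbs = 1 := by
    intro y
    induction y using QuotientGroup.induction_on with | H y => ?_
    rw [pow_natAbs_eq_one, ← QuotientGroup.mk_zpow, QuotientGroup.eq_one_iff]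
    exact hS y
  have := (hQ.of_surjective (QuotientGroup.mk'_surjective S)).finite_of_pow_eq_one
    (Int.natAbs_pos.mpr hk) hexp
  exact index_ne_zero_of_finite

end Exponent

theorem Subgroup.relIndex_sup_of_normal (H N : Subgroup G) [N.Normal] :
    H.relIndex (H ⊔ N) = H.relIndex N := by
  refine (Nat.card_congr (Equiv.ofBijective _
    ⟨(quotientSubgroupOfEmbeddingOfLE H le_sup_right).injective, ?_⟩)).symm
  intro x
  induction x using QuotientGroup.induction_on with | H x => ?_
  have hx : (x : G) ∈ ((N ⊔ H : Subgroup G) : Set G) := sup_comm H N ▸ x.2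
  obtain ⟨a, ha, b, hb, hab⟩ := (normal_mul N H ▸ hx : (x : G) ∈ (N : Set G) * (H : Set G))
  refine ⟨QuotientGroup.mk ⟨a, ha⟩, ?_⟩
  rw [quotientSubgroupOfEmbeddingOfLE_apply_mk, QuotientGroup.eq, mem_subgroupOf]
  simpa [← hab] using hb

section RationalPower

variable {A : Subgroup G} {h : G} {m n : ℤ}

theorem commutator_zpow_eq_zpow_sub (hA : A.Normal)
    (hcomm : ∀ a ∈ A, ∀ b ∈ A, a * b = b * a)
    (haction : ∀ a ∈ A, (h⁻¹ * a * h) ^ n = a ^ m) {b : G} (hb : b ∈ A) :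
    (b * h * b⁻¹ * h⁻¹) ^ m = b ^ (m - n) := by
  have hconj : (h * b * h⁻¹) ^ m = b ^ n := by
    simpa [mul_assoc] using (haction _ (hA.conj_mem b hb h)).symm
  have hcomm' : Commute b (h * b * h⁻¹)⁻¹ := hcomm b hb _ (inv_mem (hA.conj_mem b hb h))
  calc (b * h * b⁻¹ * h⁻¹) ^ m = (b * (h * b * h⁻¹)⁻¹) ^ m := by group
    _ = b ^ m * ((h * b * h⁻¹)⁻¹) ^ m := hcomm'.mul_zpow m
    _ = b ^ (m - n) := by rw [inv_zpow, hconj, zpow_sub]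

theorem zpow_sub_mem_of_normalizes (hA : A.Normal)
    (hcomm : ∀ a ∈ A, ∀ b ∈ A, a * b = b * a) (haction : ∀ a ∈ A, (h⁻¹ * a * h) ^ n = a ^ m)
    {K L : Subgroup G} (hKL : ∀ x ∈ L, ∀ y ∈ K, x * y * x⁻¹ ∈ K) (hh : h ∈ K)
    {b : G} (hbA : b ∈ A) (hbL : b ∈ L) :
    b ^ (m - n) ∈ K := by
  rw [← commutator_zpow_eq_zpow_sub hA hcomm haction hbA]
  exact zpow_mem (mul_mem (hKL b hbL h hh) (inv_mem hh)) m

theorem zpow_pow_mem_of_subnormalChain (hA : A.Normal)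
    (hcomm : ∀ a ∈ A, ∀ b ∈ A, a * b = b * a) (haction : ∀ a ∈ A, (h⁻¹ * a * h) ^ n = a ^ m) :
    ∀ {i : ℕ} {c : ℕ → Subgroup G}, SubnormalChain c i → h ∈ c 0 → A ≤ c i →
      ∀ a ∈ A, a ^ ((m - n) ^ i) ∈ c 0
  | 0, c, _, _, hAc, a, ha => by simpa using hAc ha
  | i + 1, c, hchain, hh, hAc, a, ha => by
    have hshift : SubnormalChain (fun k => c (k + 1)) i := fun k hk => hchain (k + 1) (by omega)
    have hbc := zpow_pow_mem_of_subnormalChain hA hcomm haction hshift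
      ((hchain 0 (by omega)).1 hh) hAc a ha
    rw [pow_succ, zpow_mul]
    exact zpow_sub_mem_of_normalizes hA hcomm haction (hchain 0 (by omega)).2 hh
      (zpow_mem ha _) hbc

end RationalPower

theorem semidihedral_subnormal_contains_powers_general
    (A : Subgroup G) (hA : A.Normal)
    (hcomm : ∀ a ∈ A, ∀ b ∈ A, a * b = b * a)
    (hrk : ∃ r : ℕ, ∀ B : Subgroup G, B ≤ A → B.FG →
        ∃ S : Finset G, S.card ≤ r ∧ Subgroup.closure (S : Set G) = B)
    (H : Subgroup G) (i : ℕ)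
    (c : ℕ → Subgroup G) (hc0 : c 0 = H) (hci : c i = ⊤) (hchain : SubnormalChain c i)
    (h : G) (hhH : h ∈ H)
    (m n : ℤ) (hmn : m ≠ n)
    (haction : ∀ a ∈ A, (h⁻¹ * a * h) ^ n = a ^ m) :
    (∀ a ∈ A, a ^ ((m - n) ^ i) ∈ H) ∧ H.relIndex (H ⊔ A) ≠ 0 := by
  have hpow : ∀ a ∈ A, a ^ ((m - n) ^ i) ∈ H := hc0 ▸
    zpow_pow_mem_of_subnormalChain hA hcomm haction hchain (hc0 ▸ hhH) (hci ▸ le_top)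
  refine ⟨hpow, ?_⟩
  obtain ⟨r, hrk⟩ := hrk
  have : IsMulCommutative A := .of_comm fun a b => Subtype.ext (hcomm _ a.2 _ b.2)
  rw [relIndex_sup_of_normal]
  exact (hasPruferRankLE_of_forall_fg hrk).index_ne_zero_of_zpow_mem
    (pow_ne_zero i (sub_ne_zero.mpr hmn)) fun a => by simpa [mem_subgroupOf] using hpow a a.2

/-- In a semidihedral group `G` on a torsion-free abelian subgroup `A` of
finite rank, if `H` is subnormal of defect `i`, not contained in `A`, and
`h ∈ H \ A` acts on `A` as the rational-power automorphism `m/n ≠ 1`, then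
`A^((m-n)^i) ≤ H` and `|HA : H|` is finite. -/
theorem semidihedral_subnormal_contains_powers
    (A : Subgroup G) (hA : A.Normal) (hAbot : A ≠ ⊥)
    (hcomm : ∀ a ∈ A, ∀ b ∈ A, a * b = b * a)
    (htf : ∀ a ∈ A, a ≠ 1 → ¬ IsOfFinOrder a)
    (hinertial : ∀ g : G, ∀ X : Subgroup G, X ≤ A → Subgroup.Commensurable X (conjS g X))
    (hcent : Subgroup.centralizer (A : Set G) = A)
    (hrk : ∃ r : ℕ, ∀ B : Subgroup G, B ≤ A → B.FG →
        ∃ S : Finset G, S.card ≤ r ∧ Subgroup.closure (S : Set G) = B)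
    (H : Subgroup G) (i : ℕ)
    (c : ℕ → Subgroup G) (hc0 : c 0 = H) (hci : c i = ⊤) (hchain : SubnormalChain c i)
    (h : G) (hhH : h ∈ H) (hhA : h ∉ A)
    (m n : ℤ) (hco : IsCoprime m n) (hn : 0 < n) (hmn : m ≠ n)
    (haction : ∀ a ∈ A, (h⁻¹ * a * h) ^ n = a ^ m) :
    (∀ a ∈ A, a ^ ((m - n) ^ i) ∈ H) ∧ H.relIndex (H ⊔ A) ≠ 0 :=
  semidihedral_subnormal_contains_powers_general A hA hcomm hrk H i c hc0 hci hchain h hhH m n hmn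
    haction
end
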